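/- arXiv:2010.06199 — 2 statements merged into one kernel-verified Lean document; each statement's English description precedes it below -/
import Mathlib

section
/- Let X_n be the n×n matrix of the second-order finite difference discretization of u'' + u with Dirichlet–Neumann boundary conditions, i.e. h²X_n is tridiagonal with diagonal entries 2 + h² except the (n,n) entry 1 + h², and off-diagonal entries −1, where h = 1/(n+1). Then the eigenvalues of h²X_n are exactly 2 + h² − 2cos(θ_{j,n}^{(0,1)}) with θ_{j,n}^{(0,1)} = (j − 1/2)π/(n + 1/2), j = 1, …, n. -/
open Matrix Real

/-- `h²Xₙ` for the second-order finite difference discretization of `u'' + u`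
with Dirichlet–Neumann boundary conditions, `h = 1/(n+1)`: tridiagonal with
diagonal `2 + h²` except the `(n,n)` entry `1 + h²`, off-diagonals `-1`. -/
noncomputable def fdMat (n : ℕ) : Matrix (Fin n) (Fin n) ℝ :=
  Matrix.of fun i j =>
    if i = j then
      (if (i : ℕ) = n - 1 then 1 + (1 / ((n : ℝ) + 1)) ^ 2
       else 2 + (1 / ((n : ℝ) + 1)) ^ 2)
    else if (i : ℕ) + 1 = (j : ℕ) ∨ (j : ℕ) + 1 = (i : ℕ) then -1 else 0

/-!
The vector `v_k = sin(kθ)`, `k = 1, …, n`, satisfies the interior rows of `h²Xₙ v = λ v` with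
`λ = 2 + h² - 2cos θ` by the identity `sin((k-1)θ) + sin((k+1)θ) = 2cos θ sin(kθ)`, and the
Dirichlet row because `sin 0 = 0`. The Neumann row holds exactly when `sin((n+1)θ) = sin(nθ)`,
i.e. `cos((n + 1/2)θ) = 0`, which is the `τ_{0,1}` grid. These `n` values of `θ` lie in
`(0, π)`, so the corresponding `λ` are distinct, and `n` distinct eigenvalues of an `n × n`
Hermitian matrix are all of them.
-/

open Function Set

theorem Matrix.mem_spectrum_of_mulVec_eq_smul {ι R : Type*} [Fintype ι] [DecidableEq ι]
    [Field R] {A : Matrix ι ι R} {μ : R} {v : ι → R} (hv : v ≠ 0) (h : A *ᵥ v = μ • v) :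
    μ ∈ spectrum R A := by
  rw [← Matrix.spectrum_toLin', ← Module.End.hasEigenvalue_iff_mem_spectrum]
  exact Module.End.hasEigenvalue_of_hasEigenvector
    ⟨Module.End.mem_eigenspace_iff.mpr (by simpa using h), hv⟩

theorem Matrix.IsHermitian.exists_perm_eigenvalues_eq {ι 𝕜 : Type*} [Fintype ι] [DecidableEq ι]
    [RCLike 𝕜] {A : Matrix ι ι 𝕜} (hA : A.IsHermitian) {f : ι → ℝ} (hf : Injective f)
    (hspec : ∀ i, f i ∈ spectrum ℝ A) :
    ∃ e : Equiv.Perm ι, ∀ j, hA.eigenvalues j = f (e j) := by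
  have hsub : range f ⊆ range hA.eigenvalues := by
    rw [← hA.spectrum_real_eq_range_eigenvalues]
    rintro _ ⟨i, rfl⟩
    exact hspec i
  have hrange : range f = range hA.eigenvalues := by
    refine eq_of_subset_of_ncard_le hsub ?_
    rw [ncard_range_of_injective hf, ← image_univ, ← ncard_univ]
    exact ncard_image_le
  choose g hg using fun j => hrange.symm ▸ mem_range_self (f := hA.eigenvalues) j
  have hg_surj : Surjective g := fun i => by
    obtain ⟨j, hj⟩ := hsub (mem_range_self i)
    exact ⟨j, hf (by rw [hg, hj])⟩
  exact ⟨Equiv.ofBijective g (Finite.surjective_iff_bijective.mp hg_surj), fun j => (hg j).symm⟩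

theorem Real.sin_sub_add_sin_add (x y : ℝ) : sin (x - y) + sin (x + y) = 2 * cos y * sin x := by
  rw [sin_sub, sin_add]; ring

-- The grid point `θ_{j+1,n}^{(0,1)}`: indices start at `0` here.
noncomputable def tauGrid (n j : ℕ) : ℝ := ((j : ℝ) + 1 / 2) * π / ((n : ℝ) + 1 / 2)

theorem tauGrid_mem_Ioo {n j : ℕ} (hj : j < n) : tauGrid n j ∈ Ioo 0 π := by
  have hjn : (j : ℝ) + 1 ≤ n := by exact_mod_cast hj
  refine ⟨by unfold tauGrid; positivity, ?_⟩
  rw [tauGrid, div_lt_iff₀ (by positivity)]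
  nlinarith [pi_pos]

theorem tauGrid_strictMono (n : ℕ) : StrictMono (tauGrid n) := fun a b hab => by
  unfold tauGrid
  gcongr

theorem sin_succ_mul_tauGrid (n j : ℕ) :
    sin (((n : ℝ) + 1) * tauGrid n j) = sin (n * tauGrid n j) := by
  have hmid : (((n : ℝ) + 1) * tauGrid n j + n * tauGrid n j) / 2 = j * π + π / 2 := by
    unfold tauGrid; field_simp; ring
  rw [← sub_eq_zero, sin_sub_sin, hmid, cos_add_pi_div_two, sin_nat_mul_pi]
  ring

-- `V 0` and `V (n + 1)` are ghost values: `V 0 = 0` is the Dirichlet condition, and the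
-- Neumann condition `V (n + 1) = V n` is what lowers the last diagonal entry by one.
theorem fdMat_mulVec {n : ℕ} {V : ℕ → ℝ} (h0 : V 0 = 0) (hN : V (n + 1) = V n) :
    fdMat n *ᵥ (fun k => V (k + 1)) =
      fun i : Fin n => (2 + (1 / ((n : ℝ) + 1)) ^ 2) * V (i + 1) - V i - V (i + 2) := by
  ext i
  set d :=
    if (i : ℕ) = n - 1 then 1 + (1 / ((n : ℝ) + 1)) ^ 2 else 2 + (1 / ((n : ℝ) + 1)) ^ 2
  have hentry (k : Fin n) : fdMat n i k * V (k + 1) =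
      (if (k : ℕ) = i then d * V (k + 1) else 0) - (if (k : ℕ) = i + 1 then V (k + 1) else 0) -
        (if (k : ℕ) + 1 = i then V (k + 1) else 0) := by
    simp only [fdMat, of_apply, Fin.ext_iff, d]
    generalize (i : ℕ) = a, (k : ℕ) = b
    split_ifs <;> subst_vars <;> first | omega | ring
  have hright : ∑ k ∈ Finset.range n, (if k = i + 1 then V (k + 1) else 0) =
      if (i : ℕ) + 1 < n then V (i + 2) else 0 := by
    simp [Finset.sum_ite_eq']
  have hleft : ∑ k ∈ Finset.range n, (if k + 1 = i then V (k + 1) else 0) = V i := by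
    have := Finset.sum_range_succ' (fun k => if k = (i : ℕ) then V k else 0) n
    rw [Finset.sum_ite_eq', if_pos (Finset.mem_range.mpr (by omega))] at this
    simpa [h0] using this.symm
  have hdiag : ∑ k ∈ Finset.range n, (if k = i then d * V (k + 1) else 0) = d * V (i + 1) := by
    simp [Finset.sum_ite_eq']
  simp only [mulVec, dotProduct, hentry, Finset.sum_sub_distrib]
  rw [Fin.sum_univ_eq_sum_range (fun k => if k = (i : ℕ) then d * V (k + 1) else 0),
    Fin.sum_univ_eq_sum_range (fun k => if k = (i : ℕ) + 1 then V (k + 1) else 0),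
    Fin.sum_univ_eq_sum_range (fun k => if k + 1 = (i : ℕ) then V (k + 1) else 0),
    hdiag, hleft, hright]
  by_cases hi : (i : ℕ) = n - 1
  · have hghost : V (i + 2) = V (i + 1) := by
      rw [show (i : ℕ) + 2 = n + 1 by omega, hN, show (i : ℕ) + 1 = n by omega]
    rw [if_neg (by omega), hghost]
    simp only [d, if_pos hi]
    ring
  · rw [if_pos (by omega)]
    simp only [d, if_neg hi]
    ring

noncomputable def fdEigenvalue (n j : ℕ) : ℝ :=
  2 + (1 / ((n : ℝ) + 1)) ^ 2 - 2 * cos (tauGrid n j)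

theorem fdEigenvalue_strictMonoOn (n : ℕ) : StrictMonoOn (fdEigenvalue n) (Iio n) :=
  fun a ha b hb hab => by
    have := strictAntiOn_cos (Ioo_subset_Icc_self (tauGrid_mem_Ioo ha))
      (Ioo_subset_Icc_self (tauGrid_mem_Ioo hb)) (tauGrid_strictMono n hab)
    unfold fdEigenvalue
    linarith

theorem fdMat_mulVec_sin (n j : ℕ) :
    fdMat n *ᵥ (fun k : Fin n => sin (((k : ℝ) + 1) * tauGrid n j)) =
      fdEigenvalue n j • fun k : Fin n => sin (((k : ℝ) + 1) * tauGrid n j) := by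
  set θ := tauGrid n j
  have h := fdMat_mulVec (n := n) (V := fun k => sin (k * θ)) (by simp)
    (by exact_mod_cast sin_succ_mul_tauGrid n j)
  push_cast at h
  rw [h]
  ext i
  have hrec := sin_sub_add_sin_add (((i : ℝ) + 1) * θ) θ
  rw [show ((i : ℝ) + 1) * θ - θ = i * θ by ring,
    show ((i : ℝ) + 1) * θ + θ = (i + 2) * θ by ring] at hrec
  simp only [Pi.smul_apply, smul_eq_mul, fdEigenvalue]
  linear_combination -hrec

theorem fdEigenvalue_mem_spectrum {n j : ℕ} (hj : j < n) :
    fdEigenvalue n j ∈ spectrum ℝ (fdMat n) := by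
  refine mem_spectrum_of_mulVec_eq_smul (fun hzero => ?_) (fdMat_mulVec_sin n j)
  have hsin := congrFun hzero ⟨0, by omega⟩
  simp only [Nat.cast_zero, zero_add, one_mul, Pi.zero_apply] at hsin
  exact (sin_pos_of_pos_of_lt_pi (tauGrid_mem_Ioo hj).1 (tauGrid_mem_Ioo hj).2).ne' hsin

/-- The eigenvalues of `h²Xₙ` are exactly `2 + h² - 2cos((j - 1/2)π/(n + 1/2))`,
`j = 1, …, n`, with `h = 1/(n+1)`. -/
theorem stmt_4 (n : ℕ) (hA : (fdMat n).IsHermitian) :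
    ∃ e : Equiv.Perm (Fin n), ∀ j : Fin n,
      hA.eigenvalues j =
        2 + (1 / ((n : ℝ) + 1)) ^ 2 -
          2 * Real.cos ((((e j : ℕ) : ℝ) + 1 - 1/2) * π / ((n : ℝ) + 1/2)) := by
  obtain ⟨e, he⟩ := hA.exists_perm_eigenvalues_eq (f := fun j : Fin n => fdEigenvalue n j)
    (fun a b hab => Fin.ext ((fdEigenvalue_strictMonoOn n).injOn a.isLt b.isLt hab))
    (fun j => fdEigenvalue_mem_spectrum j.isLt)
  refine ⟨e, fun j => ?_⟩
  rw [he, fdEigenvalue, tauGrid]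
  ring_nf
end

section
/- Let n be odd, h = 1/(n+1), and let A = h²X_n be the n×n tridiagonal matrix with diagonal entries 2 + h² except (n,n) entry 1 + h², and off-diagonals −1. Let P be the n × (n−1)/2 prolongation matrix with columns (…,1,2,1,…)ᵀ as in multigrid. Then Y = PᵀAP equals T_{(n−1)/2}(y_M) + R, where y_M(θ) = 4 + 6h² + 2(h² − 2)cos(θ), T_m(y_M) is the symmetric tridiagonal matrix with diagonal 4 + 6h² and off-diagonals h² − 2, and R has a single nonzero entry −1 in the bottom-right corner. -/
open Matrix

/-- Galerkin coarse-grid operator: for `n = 2m+1` odd and `h = 1/(n+1)`, with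
`A = h²Xₙ` tridiagonal (diagonal `2+h²` except `(n,n)` entry `1+h²`,
off-diagonals `-1`) and `P` the prolongation matrix, one has
`PᵀAP = T_m(y_M) + R` where `y_M(θ) = 4 + 6h² + 2(h²-2)cos θ`, i.e. `T_m(y_M)`
is symmetric tridiagonal with diagonal `4+6h²` and off-diagonals `h²-2`, and
`R` has a single nonzero entry `-1` in the bottom-right corner. -/
theorem stmt_14 (m : ℕ) (hm : 1 ≤ m) (h : ℝ) (hh : h = 1 / ((2 * m + 1 : ℕ) + 1 : ℝ))
    (A : Matrix (Fin (2 * m + 1)) (Fin (2 * m + 1)) ℝ)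
    (hA : ∀ i j, A i j =
      if i = j then (if (i : ℕ) = 2 * m then 1 + h ^ 2 else 2 + h ^ 2)
      else if (i : ℕ) + 1 = (j : ℕ) ∨ (j : ℕ) + 1 = (i : ℕ) then -1 else 0)
    (P : Matrix (Fin (2 * m + 1)) (Fin m) ℝ)
    (hP : ∀ i k, P i k =
      if (i : ℕ) = 2 * (k : ℕ) then 1
      else if (i : ℕ) = 2 * (k : ℕ) + 1 then 2
      else if (i : ℕ) = 2 * (k : ℕ) + 2 then 1 else 0)
    (T R : Matrix (Fin m) (Fin m) ℝ)
    (hT : ∀ k l, T k l =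
      if k = l then 4 + 6 * h ^ 2
      else if (k : ℕ) + 1 = (l : ℕ) ∨ (l : ℕ) + 1 = (k : ℕ) then h ^ 2 - 2 else 0)
    (hR : ∀ k l, R k l =
      if (k : ℕ) = m - 1 ∧ (l : ℕ) = m - 1 then -1 else 0) :
    Pᵀ * A * P = T + R := by
  -- value lemmas for A
  have hAdiag : ∀ a b : Fin (2*m+1), (a:ℕ) = (b:ℕ) → (a:ℕ) ≠ 2*m → A a b = 2 + h^2 := by
    intro a b e1 e2
    rw [hA, if_pos (Fin.ext e1), if_neg e2]
  have hAend : ∀ a b : Fin (2*m+1), (a:ℕ) = (b:ℕ) → (a:ℕ) = 2*m → A a b = 1 + h^2 := by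
    intro a b e1 e2
    rw [hA, if_pos (Fin.ext e1), if_pos e2]
  have hAadj : ∀ a b : Fin (2*m+1), ((a:ℕ)+1 = (b:ℕ) ∨ (b:ℕ)+1 = (a:ℕ)) → A a b = -1 := by
    intro a b e1
    have hne : ¬ a = b := by simp only [Fin.ext_iff]; omega
    rw [hA, if_neg hne, if_pos e1]
  have hAfar : ∀ a b : Fin (2*m+1), ((a:ℕ)+2 ≤ (b:ℕ) ∨ (b:ℕ)+2 ≤ (a:ℕ)) → A a b = 0 := by
    intro a b e1
    have hne : ¬ a = b := by simp only [Fin.ext_iff]; omega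
    have hne2 : ¬ ((a:ℕ)+1 = (b:ℕ) ∨ (b:ℕ)+1 = (a:ℕ)) := by omega
    rw [hA, if_neg hne, if_neg hne2]
  have hPd : ∀ (c : Fin m) (x0 x1 x2 : Fin (2*m+1)),
      (x0:ℕ) = 2*(c:ℕ) → (x1:ℕ) = 2*(c:ℕ)+1 → (x2:ℕ) = 2*(c:ℕ)+2 →
      ∀ i, P i c = (if i = x0 then (1:ℝ) else 0) + (if i = x1 then 2 else 0)
        + (if i = x2 then 1 else 0) := by
    intro c x0 x1 x2 h0 h1 h2 i
    rw [hP]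
    simp only [Fin.ext_iff, h0, h1, h2]
    split_ifs <;> first | (exfalso; omega) | norm_num
  ext k l
  have hk : (k:ℕ) < m := k.isLt
  have hl : (l:ℕ) < m := l.isLt
  obtain ⟨a0, va0⟩ : ∃ a : Fin (2*m+1), (a:ℕ) = 2*(k:ℕ) := ⟨⟨_, by omega⟩, rfl⟩
  obtain ⟨a1, va1⟩ : ∃ a : Fin (2*m+1), (a:ℕ) = 2*(k:ℕ)+1 := ⟨⟨_, by omega⟩, rfl⟩
  obtain ⟨a2, va2⟩ : ∃ a : Fin (2*m+1), (a:ℕ) = 2*(k:ℕ)+2 := ⟨⟨_, by omega⟩, rfl⟩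
  obtain ⟨b0, vb0⟩ : ∃ a : Fin (2*m+1), (a:ℕ) = 2*(l:ℕ) := ⟨⟨_, by omega⟩, rfl⟩
  obtain ⟨b1, vb1⟩ : ∃ a : Fin (2*m+1), (a:ℕ) = 2*(l:ℕ)+1 := ⟨⟨_, by omega⟩, rfl⟩
  obtain ⟨b2, vb2⟩ : ∃ a : Fin (2*m+1), (a:ℕ) = 2*(l:ℕ)+2 := ⟨⟨_, by omega⟩, rfl⟩
  have key : (Pᵀ * A * P) k l =
      (A a0 b0 + 2*A a1 b0 + A a2 b0) + 2*(A a0 b1 + 2*A a1 b1 + A a2 b1)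
        + (A a0 b2 + 2*A a1 b2 + A a2 b2) := by
    simp only [Matrix.mul_apply, Matrix.transpose_apply]
    simp only [hPd k a0 a1 a2 va0 va1 va2, hPd l b0 b1 b2 vb0 vb1 vb2]
    simp only [add_mul, mul_add, ite_mul, mul_ite, one_mul, mul_one, zero_mul, mul_zero,
      Finset.sum_add_distrib, Finset.sum_ite_eq, Finset.sum_ite_eq', Finset.mem_univ, if_true]
    ring
  rw [Matrix.add_apply, hT, hR, key]
  by_cases hkl : (k:ℕ) = (l:ℕ)
  · have hkl' : k = l := Fin.ext hkl
    by_cases hb : (k:ℕ) = m - 1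
    · -- boundary diagonal
      rw [hAdiag a0 b0 (by omega) (by omega), hAadj a1 b0 (by omega),
        hAfar a2 b0 (by omega), hAadj a0 b1 (by omega), hAdiag a1 b1 (by omega) (by omega),
        hAadj a2 b1 (by omega), hAfar a0 b2 (by omega), hAadj a1 b2 (by omega),
        hAend a2 b2 (by omega) (by omega), if_pos hkl', if_pos ⟨hb, by omega⟩]
      ring
    · rw [hAdiag a0 b0 (by omega) (by omega), hAadj a1 b0 (by omega),
        hAfar a2 b0 (by omega), hAadj a0 b1 (by omega), hAdiag a1 b1 (by omega) (by omega),
        hAadj a2 b1 (by omega), hAfar a0 b2 (by omega), hAadj a1 b2 (by omega),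
        hAdiag a2 b2 (by omega) (by omega), if_pos hkl', if_neg (by omega : ¬((k:ℕ) = m-1 ∧ (l:ℕ) = m-1))]
      ring
  · have hkl' : ¬ k = l := fun e => hkl (by rw [e])
    by_cases h1 : (k:ℕ) + 1 = (l:ℕ)
    · rw [hAfar a0 b0 (by omega), hAadj a1 b0 (by omega), hAdiag a2 b0 (by omega) (by omega),
        hAfar a0 b1 (by omega), hAfar a1 b1 (by omega), hAadj a2 b1 (by omega),
        hAfar a0 b2 (by omega), hAfar a1 b2 (by omega), hAfar a2 b2 (by omega),
        if_neg hkl', if_pos (Or.inl h1), if_neg (by omega : ¬((k:ℕ) = m-1 ∧ (l:ℕ) = m-1))]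
      ring
    · by_cases h2 : (l:ℕ) + 1 = (k:ℕ)
      · rw [hAfar a0 b0 (by omega), hAfar a1 b0 (by omega), hAfar a2 b0 (by omega),
          hAadj a0 b1 (by omega), hAfar a1 b1 (by omega), hAfar a2 b1 (by omega),
          hAdiag a0 b2 (by omega) (by omega), hAadj a1 b2 (by omega), hAfar a2 b2 (by omega),
          if_neg hkl', if_pos (Or.inr h2), if_neg (by omega : ¬((k:ℕ) = m-1 ∧ (l:ℕ) = m-1))]
        ring
      · rw [hAfar a0 b0 (by omega), hAfar a1 b0 (by omega), hAfar a2 b0 (by omega),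
          hAfar a0 b1 (by omega), hAfar a1 b1 (by omega), hAfar a2 b1 (by omega),
          hAfar a0 b2 (by omega), hAfar a1 b2 (by omega), hAfar a2 b2 (by omega),
          if_neg hkl', if_neg (by omega : ¬((k:ℕ)+1 = (l:ℕ) ∨ (l:ℕ)+1 = (k:ℕ))),
          if_neg (by omega : ¬((k:ℕ) = m-1 ∧ (l:ℕ) = m-1))]
        ring
end
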